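/- Let F : [0,1] → ℝ^K be continuous with A(t₁,t₂) = ∫_{t₁}^{t₂} F(s)F(s)* ds positive definite for all 0 ≤ t₁ < t₂ ≤ 1, let 0 < θ₁ < θ₂ < 1, let a₁, a₂, a₃ ∈ ℝ^K, and define Π(s) = a₁ for s ≤ θ₁, a₂ for θ₁ < s ≤ θ₂, a₃ for s > θ₂, and m(t) = ∫₀ᵗ F(s)F(s)*Π(s) ds − A(0,t)A(0,1)⁻¹ ∫₀¹ F(s)F(s)*Π(s) ds. Suppose there exist h > 0 and B > 0 such that ‖A(θ₁,θ₂)A(0,θ₁)⁻¹‖ ≤ h and ‖A(θ₁,θ₂)(a₂ − a₁)‖ ≥ B. Then max( ‖m(θ₁)‖, ‖m(θ₂)‖ ) ≥ B / (2(h+1)); in particular, max_{t∈[0,1]} ‖m(t)‖ ≥ B / (2(h+1)). -/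
import Mathlib


open MeasureTheory Matrix intervalIntegral

/-- `A(t₁,t₂) = ∫_{t₁}^{t₂} F(s)F(s)* ds` (entrywise interval integral). -/
noncomputable def Amat {K : ℕ} (F : ℝ → Fin K → ℝ) (t₁ t₂ : ℝ) :
    Matrix (Fin K) (Fin K) ℝ :=
  Matrix.of fun i j => ∫ s in t₁..t₂, F s i * F s j

/-- Squared Frobenius norm of a matrix. -/
noncomputable def frobSq {K M : ℕ} (C : Matrix (Fin K) (Fin M) ℝ) : ℝ :=
  ∑ i, ∑ j, (C i j) ^ 2

/-- Frobenius norm of a matrix. -/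
noncomputable def frobNorm {K M : ℕ} (C : Matrix (Fin K) (Fin M) ℝ) : ℝ :=
  Real.sqrt (frobSq C)

/-- Euclidean norm on `ℝ^K`. -/
noncomputable def eNorm {K : ℕ} (v : Fin K → ℝ) : ℝ := Real.sqrt (∑ j, (v j) ^ 2)

/-- The piecewise-constant coefficient vector of a model with two change-points. -/
noncomputable def Pi2 {K : ℕ} (a₁ a₂ a₃ : Fin K → ℝ) (θ₁ θ₂ s : ℝ) : Fin K → ℝ :=
  if s ≤ θ₁ then a₁ else if s ≤ θ₂ then a₂ else a₃

/-- `m(t) = ∫₀ᵗ F(s)F(s)*Π(s) ds − A(0,t)A(0,1)⁻¹ ∫₀¹ F(s)F(s)*Π(s) ds`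
(entrywise interval integrals). -/
noncomputable def mLim2 {K : ℕ} (F : ℝ → Fin K → ℝ) (a₁ a₂ a₃ : Fin K → ℝ)
    (θ₁ θ₂ t : ℝ) : Fin K → ℝ :=
  (fun j => ∫ s in (0:ℝ)..t, F s j * (∑ l, F s l * Pi2 a₁ a₂ a₃ θ₁ θ₂ s l)) -
    (Amat F 0 t * (Amat F 0 1)⁻¹).mulVec
      (fun j => ∫ s in (0:ℝ)..1, F s j * (∑ l, F s l * Pi2 a₁ a₂ a₃ θ₁ θ₂ s l))

section AuxCP

variable {K : ℕ}

lemma eNorm_eq_norm (v : Fin K → ℝ) :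
    eNorm v = ‖(WithLp.equiv 2 (Fin K → ℝ)).symm v‖ := by
  rw [EuclideanSpace.norm_eq]
  simp [eNorm, Real.norm_eq_abs, sq_abs]

lemma eNorm_nonneg' (v : Fin K → ℝ) : 0 ≤ eNorm v := Real.sqrt_nonneg _

lemma eNorm_sub_le (u v : Fin K → ℝ) : eNorm (u - v) ≤ eNorm u + eNorm v := by
  rw [eNorm_eq_norm, eNorm_eq_norm, eNorm_eq_norm]
  exact norm_sub_le _ _

lemma eNorm_mulVec_le (M : Matrix (Fin K) (Fin K) ℝ) (v : Fin K → ℝ) :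
    eNorm (M.mulVec v) ≤ frobNorm M * eNorm v := by
  have hfs : 0 ≤ frobSq M :=
    Finset.sum_nonneg fun i _ => Finset.sum_nonneg fun j _ => sq_nonneg _
  rw [eNorm, eNorm, frobNorm, ← Real.sqrt_mul hfs]
  apply Real.sqrt_le_sqrt
  rw [frobSq, Finset.sum_mul]
  apply Finset.sum_le_sum
  intro i _
  calc (M.mulVec v i) ^ 2 = (∑ j, M i j * v j) ^ 2 := by
        simp [Matrix.mulVec, dotProduct]
    _ ≤ (∑ j, M i j ^ 2) * ∑ j, v j ^ 2 :=
        Finset.sum_mul_sq_le_sq_mul_sq _ _ _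

lemma piece_integral (F : ℝ → Fin K → ℝ) (hF : Continuous F) (a : Fin K → ℝ)
    (P : ℝ → Fin K → ℝ) (u v : ℝ) (hc : ∀ s ∈ Set.uIoc u v, P s = a) :
    (fun j => ∫ s in u..v, F s j * (∑ l, F s l * P s l)) = (Amat F u v).mulVec a := by
  funext j
  have h1 : (∫ s in u..v, F s j * (∑ l, F s l * P s l))
      = ∫ s in u..v, ∑ l, (F s j * F s l) * a l := by
    apply intervalIntegral.integral_congr_ae
    filter_upwards with s hs
    rw [hc s hs, Finset.mul_sum]
    exact Finset.sum_congr rfl fun l _ => by ring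
  rw [h1, intervalIntegral.integral_finset_sum]
  · simp only [Amat, Matrix.mulVec, dotProduct, Matrix.of_apply]
    exact Finset.sum_congr rfl fun l _ => integral_mul_const _ _
  · intro l _
    exact ((((continuous_apply j).comp hF).mul
      ((continuous_apply l).comp hF)).mul continuous_const).intervalIntegrable u v

lemma piece_integrable (F : ℝ → Fin K → ℝ) (hF : Continuous F)
    (P : ℝ → Fin K → ℝ) (a : Fin K → ℝ) (j : Fin K) (u v : ℝ)
    (hc : ∀ s ∈ Set.uIoc u v, P s = a) :
    IntervalIntegrable (fun s => F s j * (∑ l, F s l * P s l)) volume u v := by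
  rw [intervalIntegrable_iff]
  have hcont : Continuous (fun s => F s j * (∑ l, F s l * a l)) := by
    apply ((continuous_apply j).comp hF).mul
    exact continuous_finset_sum _ fun l _ => ((continuous_apply l).comp hF).mul continuous_const
  have h0 : IntegrableOn (fun s => F s j * (∑ l, F s l * a l)) (Set.uIoc u v) volume :=
    intervalIntegrable_iff.mp (hcont.intervalIntegrable u v)
  exact h0.congr_fun (fun s hs => by rw [hc s hs]) measurableSet_uIoc

end AuxCP

/-- Key deterministic lemma for detection of multiple change-points: if at least two
change-points are present and `‖A(θ₁,θ₂)A(0,θ₁)⁻¹‖ ≤ h`,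
`‖A(θ₁,θ₂)(a₂ − a₁)‖ ≥ B`, then `max(‖m(θ₁)‖, ‖m(θ₂)‖) ≥ B/(2(h+1))`; in particular
`max_{t∈[0,1]} ‖m(t)‖ ≥ B/(2(h+1))`. -/
theorem two_change_points_mean_norm_lower_bound {K : ℕ}
    (F : ℝ → Fin K → ℝ) (hF : Continuous F)
    (hA : ∀ t₁ t₂ : ℝ, 0 ≤ t₁ → t₁ < t₂ → t₂ ≤ 1 → (Amat F t₁ t₂).PosDef)
    (θ₁ θ₂ : ℝ) (hθ₁ : 0 < θ₁) (hθ : θ₁ < θ₂) (hθ₂ : θ₂ < 1)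
    (a₁ a₂ a₃ : Fin K → ℝ)
    (h B : ℝ) (hh : 0 < h) (hB : 0 < B)
    (hAbound : frobNorm (Amat F θ₁ θ₂ * (Amat F 0 θ₁)⁻¹) ≤ h)
    (hjump : B ≤ eNorm ((Amat F θ₁ θ₂).mulVec (a₂ - a₁))) :
    B / (2 * (h + 1)) ≤
      max (eNorm (mLim2 F a₁ a₂ a₃ θ₁ θ₂ θ₁)) (eNorm (mLim2 F a₁ a₂ a₃ θ₁ θ₂ θ₂)) := by
  -- constancy of Pi2 on the two relevant intervals
  have hc1 : ∀ s ∈ Set.uIoc (0:ℝ) θ₁, Pi2 a₁ a₂ a₃ θ₁ θ₂ s = a₁ := by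
    intro s hs
    rw [Set.uIoc_of_le hθ₁.le] at hs
    simp [Pi2, hs.2]
  have hc2 : ∀ s ∈ Set.uIoc θ₁ θ₂, Pi2 a₁ a₂ a₃ θ₁ θ₂ s = a₂ := by
    intro s hs
    rw [Set.uIoc_of_le hθ.le] at hs
    simp [Pi2, not_le.mpr hs.1, hs.2]
  -- invertibility of A(0,θ₁)
  have hA1 : (Amat F 0 θ₁).PosDef := hA 0 θ₁ le_rfl hθ₁ (by linarith)
  have hA1inv : (Amat F 0 θ₁)⁻¹ * (Amat F 0 θ₁) = 1 :=
    Matrix.nonsing_inv_mul _ (isUnit_iff_ne_zero.mpr hA1.det_pos.ne')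
  set w : Fin K → ℝ :=
    fun j => ∫ s in (0:ℝ)..1, F s j * (∑ l, F s l * Pi2 a₁ a₂ a₃ θ₁ θ₂ s l) with hw
  set u : Fin K → ℝ := (Amat F 0 1)⁻¹.mulVec w with hu
  -- segment integrals
  have hg1 : (fun j => ∫ s in (0:ℝ)..θ₁, F s j * (∑ l, F s l * Pi2 a₁ a₂ a₃ θ₁ θ₂ s l))
      = (Amat F 0 θ₁).mulVec a₁ := piece_integral F hF a₁ _ 0 θ₁ hc1
  have hg12 : (fun j => ∫ s in θ₁..θ₂, F s j * (∑ l, F s l * Pi2 a₁ a₂ a₃ θ₁ θ₂ s l))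
      = (Amat F θ₁ θ₂).mulVec a₂ := piece_integral F hF a₂ _ θ₁ θ₂ hc2
  have hg2 : (fun j => ∫ s in (0:ℝ)..θ₂, F s j * (∑ l, F s l * Pi2 a₁ a₂ a₃ θ₁ θ₂ s l))
      = (Amat F 0 θ₁).mulVec a₁ + (Amat F θ₁ θ₂).mulVec a₂ := by
    funext j
    have hadd := intervalIntegral.integral_add_adjacent_intervals
      (piece_integrable F hF _ a₁ j 0 θ₁ hc1) (piece_integrable F hF _ a₂ j θ₁ θ₂ hc2)
    rw [← hadd, Pi.add_apply, ← congrFun hg1 j, ← congrFun hg12 j]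
  have hA02 : Amat F 0 θ₂ = Amat F 0 θ₁ + Amat F θ₁ θ₂ := by
    ext i j
    have hcont : ∀ a b : ℝ, IntervalIntegrable (fun s => F s i * F s j) volume a b :=
      fun a b => (((continuous_apply i).comp hF).mul
        ((continuous_apply j).comp hF)).intervalIntegrable a b
    have := intervalIntegral.integral_add_adjacent_intervals (hcont 0 θ₁) (hcont θ₁ θ₂)
    simp only [Amat, Matrix.add_apply, Matrix.of_apply]
    exact this.symm
  -- expressions for m(θ₁), m(θ₂)
  have hm1 : mLim2 F a₁ a₂ a₃ θ₁ θ₂ θ₁ = (Amat F 0 θ₁).mulVec (a₁ - u) := by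
    simp only [mLim2]
    rw [hg1, ← Matrix.mulVec_mulVec, ← hw, ← hu, Matrix.mulVec_sub]
  have hm2 : mLim2 F a₁ a₂ a₃ θ₁ θ₂ θ₂
      = (Amat F 0 θ₁).mulVec (a₁ - u) + (Amat F θ₁ θ₂).mulVec (a₂ - u) := by
    simp only [mLim2]
    rw [hg2, hA02, Matrix.add_mul, Matrix.add_mulVec, ← Matrix.mulVec_mulVec,
      ← Matrix.mulVec_mulVec, ← hw, ← hu, Matrix.mulVec_sub, Matrix.mulVec_sub]
    abel
  -- key identity
  have hkey : (Amat F θ₁ θ₂).mulVec (a₂ - a₁)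
      = mLim2 F a₁ a₂ a₃ θ₁ θ₂ θ₂ - mLim2 F a₁ a₂ a₃ θ₁ θ₂ θ₁
        - (Amat F θ₁ θ₂ * (Amat F 0 θ₁)⁻¹).mulVec (mLim2 F a₁ a₂ a₃ θ₁ θ₂ θ₁) := by
    rw [hm1, hm2, Matrix.mulVec_mulVec, Matrix.mul_assoc, hA1inv, Matrix.mul_one]
    simp only [Matrix.mulVec_sub]
    abel
  -- norm estimates
  set x := eNorm (mLim2 F a₁ a₂ a₃ θ₁ θ₂ θ₁) with hx
  set y := eNorm (mLim2 F a₁ a₂ a₃ θ₁ θ₂ θ₂) with hy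
  have hx0 : 0 ≤ x := eNorm_nonneg' _
  have hy0 : 0 ≤ y := eNorm_nonneg' _
  have hstep : eNorm ((Amat F θ₁ θ₂).mulVec (a₂ - a₁)) ≤ (y + x) + h * x := by
    rw [hkey]
    refine le_trans (eNorm_sub_le _ _) (add_le_add (eNorm_sub_le _ _) ?_)
    calc eNorm ((Amat F θ₁ θ₂ * (Amat F 0 θ₁)⁻¹).mulVec (mLim2 F a₁ a₂ a₃ θ₁ θ₂ θ₁))
        ≤ frobNorm (Amat F θ₁ θ₂ * (Amat F 0 θ₁)⁻¹) * x := eNorm_mulVec_le _ _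
      _ ≤ h * x := mul_le_mul_of_nonneg_right hAbound hx0
  have hBle : B ≤ (y + x) + h * x := le_trans hjump hstep
  have hxc : x ≤ max x y := le_max_left _ _
  have hyc : y ≤ max x y := le_max_right _ _
  have hc0 : 0 ≤ max x y := le_trans hx0 hxc
  rw [div_le_iff₀ (by linarith : (0:ℝ) < 2 * (h + 1))]
  nlinarith [mul_le_mul_of_nonneg_left hxc hh.le]
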